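/- arXiv:1202.1785 — 3 statements merged into one kernel-verified Lean document; each statement's English description precedes it below -/
import Mathlib

section
/- Let k ∈ ℂ and z₀ ∈ ℂ. Suppose g, M₁₂, M₂₂ : ℂ → ℂ are real-differentiable at z₀ with g(z₀) ≠ 0, and suppose that at z₀ the equations ∂M₂₂(z₀) = Q₂₁(z₀)·M₁₂(z₀) and ∂̄M₁₂(z₀) − i·k·M₁₂(z₀) = Q₁₂(z₀)·M₂₂(z₀) hold. Then ∂(z ↦ M₂₂(z)/g(z) − 1)(z₀) = ∂̄(z ↦ M₁₂(z)/g(z))(z₀) − i·k·M₁₂(z₀)/g(z₀); that is, ∂(g⁻¹M₂₂ − 1) = (∂̄ − ik)(g⁻¹M₁₂) at z₀. -/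
/-! By the quotient rule for Wirtinger derivatives, after substituting the two equations for
`∂M₂₂` and `∂̄M₁₂ - ikM₁₂`, both sides equal `-(∂g · M₂₂ + ∂̄g · M₁₂) / g²` at `z₀`. -/

open Complex

/-- Wirtinger derivative ∂f(z) = (1/2)(Df(z)(1) - i·Df(z)(i)), with Df the real Fréchet derivative. -/
noncomputable def dz (f : ℂ → ℂ) (z : ℂ) : ℂ :=
  (1/2 : ℂ) * (fderiv ℝ f z 1 - Complex.I * fderiv ℝ f z Complex.I)

/-- Wirtinger derivative ∂̄f(z) = (1/2)(Df(z)(1) + i·Df(z)(i)). -/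
noncomputable def dzbar (f : ℂ → ℂ) (z : ℂ) : ℂ :=
  (1/2 : ℂ) * (fderiv ℝ f z 1 + Complex.I * fderiv ℝ f z Complex.I)

/-- Matrix potential entry Q₁₂(z) = -∂g(z)/g(z). -/
noncomputable def Q12 (g : ℂ → ℂ) (z : ℂ) : ℂ := - dz g z / g z

/-- Matrix potential entry Q₂₁(z) = -∂̄g(z)/g(z). -/
noncomputable def Q21 (g : ℂ → ℂ) (z : ℂ) : ℂ := - dzbar g z / g z

/-- The unimodular exponential e(z,k) = exp(i(zk + z̄k̄)). -/
noncomputable def efun (z k : ℂ) : ℂ :=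
  Complex.exp (Complex.I * (z * k + (starRingEnd ℂ) z * (starRingEnd ℂ) k))

section QuotientRule

variable {𝕜 𝕜' E : Type*} [NontriviallyNormedField 𝕜] [NormedField 𝕜'] [NormedAlgebra 𝕜 𝕜']
  [NormedAddCommGroup E] [NormedSpace 𝕜 E] {f h : E → 𝕜'} {z : E}

theorem fderiv_inv_apply (hh : DifferentiableAt 𝕜 h z) (hz : h z ≠ 0) (v : E) :
    fderiv 𝕜 (fun w => (h w)⁻¹) z v = -fderiv 𝕜 h z v / h z ^ 2 := by
  rw [fderiv_fun_comp z (differentiableAt_inv hz) hh, fderiv_inv' hz]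
  simp only [ContinuousLinearMap.coe_comp, Function.comp_apply, neg_apply,
    ContinuousLinearMap.mulLeftRight_apply]
  field_simp

theorem fderiv_div_apply (hf : DifferentiableAt 𝕜 f z) (hh : DifferentiableAt 𝕜 h z)
    (hz : h z ≠ 0) (v : E) :
    fderiv 𝕜 (fun w => f w / h w) z v =
      (fderiv 𝕜 f z v * h z - f z * fderiv 𝕜 h z v) / h z ^ 2 := by
  simp only [div_eq_mul_inv]
  rw [fderiv_fun_mul hf (hh.fun_inv hz)]
  simp only [add_apply, smul_apply, smul_eq_mul, fderiv_inv_apply hh hz]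
  field_simp
  ring

end QuotientRule

section Wirtinger

variable {f h : ℂ → ℂ} {z : ℂ}

theorem dz_sub_const (c : ℂ) : dz (fun w => f w - c) z = dz f z := by
  simp only [dz, fderiv_sub_const]

theorem dz_div (hf : DifferentiableAt ℝ f z) (hh : DifferentiableAt ℝ h z) (hz : h z ≠ 0) :
    dz (fun w => f w / h w) z = (dz f z * h z - f z * dz h z) / h z ^ 2 := by
  simp only [dz, fderiv_div_apply hf hh hz]
  field_simp
  ring

theorem dzbar_div (hf : DifferentiableAt ℝ f z) (hh : DifferentiableAt ℝ h z) (hz : h z ≠ 0) :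
    dzbar (fun w => f w / h w) z = (dzbar f z * h z - f z * dzbar h z) / h z ^ 2 := by
  simp only [dzbar, fderiv_div_apply hf hh hz]
  field_simp
  ring

end Wirtinger

theorem stmt1 (k z₀ : ℂ) (g M₁₂ M₂₂ : ℂ → ℂ)
    (hg : DifferentiableAt ℝ g z₀)
    (hM12 : DifferentiableAt ℝ M₁₂ z₀)
    (hM22 : DifferentiableAt ℝ M₂₂ z₀)
    (hg0 : g z₀ ≠ 0)
    (h1 : dz M₂₂ z₀ = Q21 g z₀ * M₁₂ z₀)
    (h2 : dzbar M₁₂ z₀ - Complex.I * k * M₁₂ z₀ = Q12 g z₀ * M₂₂ z₀) :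
    dz (fun z => M₂₂ z / g z - 1) z₀ =
      dzbar (fun z => M₁₂ z / g z) z₀ - Complex.I * k * M₁₂ z₀ / g z₀ := by
  rw [dz_sub_const, dz_div hM22 hg hg0, dzbar_div hM12 hg hg0, h1, eq_add_of_sub_eq h2, Q12, Q21]
  field_simp
  ring
end

section
/- Let k ∈ ℂ and z₀ ∈ ℂ. Suppose g, M₁₁, M₁₂, M₂₁, M₂₂ : ℂ → ℂ with g, M₂₁, M₂₂ real-differentiable at z₀, g(z₀) ≠ 0, and suppose that at z₀ the equations ∂M₂₂(z₀) = Q₂₁(z₀)·M₁₂(z₀) and ∂M₂₁(z₀) + i·k·M₂₁(z₀) = Q₂₁(z₀)·M₁₁(z₀) hold. Define M₋(z) = M₂₂(z) + e(z,k)·M₂₁(z) and M₊(z) = M₁₁(z) + e(z,−k)·M₁₂(z). Then ∂M₋(z₀) = Q₂₁(z₀)·e(z₀,k)·M₊(z₀). -/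
open Complex

/-! Since `∂ e(·,k) = i k e(·,k)`, the Leibniz rule gives `∂M₋ = ∂M₂₂ + e(·,k) (∂M₂₁ + i k M₂₁)`;
the two hypotheses together with `e(z,k) e(z,-k) = 1` turn this into `Q₂₁ e(·,k) M₊`. -/

lemma dz_add {f g : ℂ → ℂ} {z : ℂ} (hf : DifferentiableAt ℝ f z) (hg : DifferentiableAt ℝ g z) :
    dz (fun w => f w + g w) z = dz f z + dz g z := by
  simp only [dz, fderiv_fun_add hf hg, add_apply]
  ring

lemma dz_mul {f g : ℂ → ℂ} {z : ℂ} (hf : DifferentiableAt ℝ f z) (hg : DifferentiableAt ℝ g z) :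
    dz (fun w => f w * g w) z = dz f z * g z + f z * dz g z := by
  simp only [dz, fderiv_fun_mul hf hg, add_apply, smul_apply, smul_eq_mul]
  ring

lemma hasFDerivAt_efun (k z : ℂ) :
    HasFDerivAt (fun w => efun w k)
      (efun z k • (Complex.I • (k • ContinuousLinearMap.id ℝ ℂ +
        (starRingEnd ℂ) k • Complex.conjCLE.toContinuousLinearMap))) z :=
  ((((hasFDerivAt_id z).mul_const k).add
    (Complex.conjCLE.hasFDerivAt.mul_const _)).const_mul Complex.I).cexp

lemma dz_efun (k z : ℂ) : dz (fun w => efun w k) z = Complex.I * k * efun z k := by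
  rw [dz, (hasFDerivAt_efun k z).fderiv]
  simp only [one_div, smul_add, add_apply, smul_apply, ContinuousLinearMap.id_apply, smul_eq_mul,
    mul_one, ContinuousLinearEquiv.coe_coe, ContinuousAlgEquiv.coeCLE_apply, conjCAE_apply, map_one,
    conj_I, mul_neg]
  linear_combination (2⁻¹ * Complex.I * efun z k * ((starRingEnd ℂ) k - k)) * Complex.I_mul_I

lemma efun_mul_efun_neg (z k : ℂ) : efun z k * efun z (-k) = 1 := by
  rw [efun, efun, ← Complex.exp_add, ← Complex.exp_zero]
  congr 1
  simp only [map_neg]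
  ring

theorem stmt9_general (k z₀ : ℂ) (g M₁₁ M₁₂ M₂₁ M₂₂ : ℂ → ℂ)
    (hM21 : DifferentiableAt ℝ M₂₁ z₀)
    (hM22 : DifferentiableAt ℝ M₂₂ z₀)
    (h1 : dz M₂₂ z₀ = Q21 g z₀ * M₁₂ z₀)
    (h2 : dz M₂₁ z₀ + Complex.I * k * M₂₁ z₀ = Q21 g z₀ * M₁₁ z₀) :
    dz (fun z => M₂₂ z + efun z k * M₂₁ z) z₀ =
      Q21 g z₀ * efun z₀ k * (M₁₁ z₀ + efun z₀ (-k) * M₁₂ z₀) := by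
  have he : DifferentiableAt ℝ (fun z => efun z k) z₀ := (hasFDerivAt_efun k z₀).differentiableAt
  rw [dz_add hM22 (he.fun_mul hM21), dz_mul he hM21, dz_efun, h1]
  linear_combination efun z₀ k * h2 - Q21 g z₀ * M₁₂ z₀ * efun_mul_efun_neg z₀ k

theorem stmt9 (k z₀ : ℂ) (g M₁₁ M₁₂ M₂₁ M₂₂ : ℂ → ℂ)
    (hg : DifferentiableAt ℝ g z₀)
    (hM21 : DifferentiableAt ℝ M₂₁ z₀)
    (hM22 : DifferentiableAt ℝ M₂₂ z₀)
    (hg0 : g z₀ ≠ 0)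
    (h1 : dz M₂₂ z₀ = Q21 g z₀ * M₁₂ z₀)
    (h2 : dz M₂₁ z₀ + Complex.I * k * M₂₁ z₀ = Q21 g z₀ * M₁₁ z₀) :
    dz (fun z => M₂₂ z + efun z k * M₂₁ z) z₀ =
      Q21 g z₀ * efun z₀ k * (M₁₁ z₀ + efun z₀ (-k) * M₁₂ z₀) :=
  stmt9_general k z₀ g M₁₁ M₁₂ M₂₁ M₂₂ hM21 hM22 h1 h2
end

section
/- Let k ∈ ℂ and z₀ ∈ ℂ. Suppose g, M₁₁, M₁₂, M₂₁, M₂₂ : ℂ → ℂ with g, M₁₁, M₁₂ real-differentiable at z₀, g(z₀) ≠ 0, and suppose that at z₀ the equations ∂̄M₁₁(z₀) = Q₁₂(z₀)·M₂₁(z₀) and ∂̄M₁₂(z₀) − i·k·M₁₂(z₀) = Q₁₂(z₀)·M₂₂(z₀) hold. Define M₊(z) = M₁₁(z) + e(z,−k)·M₁₂(z) and M₋(z) = M₂₂(z) + e(z,k)·M₂₁(z). Then ∂̄M₊(z₀) = Q₁₂(z₀)·e(z₀,−k)·M₋(z₀) + i·(k − k̄)·e(z₀,−k)·M₁₂(z₀),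 where k̄ is the complex conjugate of k. -/
open Complex

/-! By the Leibniz rule for `∂̄`, the claim reduces to `∂̄ e(·, -k) = -i k̄ e(·, -k)`, which holds
because `exp` is holomorphic and `∂̄` kills `z` and sends `z̄` to `1`; the term `Q₁₂ M₂₁` is
rewritten as `Q₁₂ e(z₀, -k) e(z₀, k) M₂₁` using `e(z₀, -k) e(z₀, k) = 1`. -/

section Wirtinger

variable {f h : ℂ → ℂ} {z : ℂ}

lemma dzbar_add (hf : DifferentiableAt ℝ f z) (hh : DifferentiableAt ℝ h z) :
    dzbar (fun w => f w + h w) z = dzbar f z + dzbar h z := by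
  simp only [dzbar, fderiv_fun_add hf hh, add_apply]
  ring

lemma dzbar_mul (hf : DifferentiableAt ℝ f z) (hh : DifferentiableAt ℝ h z) :
    dzbar (fun w => f w * h w) z = dzbar f z * h z + f z * dzbar h z := by
  simp only [dzbar, fderiv_fun_mul hf hh, add_apply, smul_apply, smul_eq_mul]
  ring

lemma dzbar_const_mul (c : ℂ) (hf : DifferentiableAt ℝ f z) :
    dzbar (fun w => c * f w) z = c * dzbar f z := by
  simp only [dzbar, fderiv_const_mul hf, smul_apply, smul_eq_mul]
  ring

lemma dzbar_mul_const (c : ℂ) (hf : DifferentiableAt ℝ f z) :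
    dzbar (fun w => f w * c) z = dzbar f z * c := by
  simp only [dzbar, fderiv_mul_const hf, smul_apply, smul_eq_mul]
  ring

lemma dzbar_id : dzbar (fun w => w) z = 0 := by
  simp [dzbar]

lemma dzbar_conj : dzbar (fun w => (starRingEnd ℂ) w) z = 1 := by
  have : fderiv ℝ (fun w => (starRingEnd ℂ) w) z = conjCLE.toContinuousLinearMap :=
    conjCLE.hasFDerivAt.fderiv
  simp only [dzbar, this, ContinuousLinearEquiv.coe_coe, ContinuousAlgEquiv.coeCLE_apply,
    conjCAE_apply, map_one, conj_I, mul_neg, I_mul_I, neg_neg]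
  norm_num

lemma dzbar_comp (hh : DifferentiableAt ℂ h (f z)) (hf : DifferentiableAt ℝ f z) :
    dzbar (fun w => h (f w)) z = deriv h (f z) * dzbar f z := by
  have hcomp := (hh.hasDerivAt.hasFDerivAt.restrictScalars ℝ).comp z hf.hasFDerivAt
  simp only [dzbar, Function.comp_def] at hcomp ⊢
  rw [hcomp.fderiv]
  simp only [ContinuousLinearMap.comp_apply, ContinuousLinearMap.coe_restrictScalars',
    ContinuousLinearMap.toSpanSingleton_apply, smul_eq_mul]
  ring

end Wirtinger

lemma differentiableAt_efun (a z : ℂ) : DifferentiableAt ℝ (fun w => efun w a) z := by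
  unfold efun
  fun_prop

lemma dzbar_efun (a z : ℂ) :
    dzbar (fun w => efun w a) z = Complex.I * (starRingEnd ℂ) a * efun z a := by
  unfold efun
  rw [dzbar_comp differentiableAt_exp (by fun_prop), Complex.deriv_exp,
    dzbar_const_mul _ (by fun_prop), dzbar_add (by fun_prop) (by fun_prop),
    dzbar_mul_const _ (by fun_prop), dzbar_mul_const _ (by fun_prop), dzbar_id, dzbar_conj]
  ring

lemma efun_neg_mul_efun (z k : ℂ) : efun z (-k) * efun z k = 1 := by
  rw [efun, efun, ← Complex.exp_add, map_neg, ← Complex.exp_zero]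
  ring_nf

theorem stmt10_general (k z₀ : ℂ) (g M₁₁ M₁₂ M₂₁ M₂₂ : ℂ → ℂ)
    (hM11 : DifferentiableAt ℝ M₁₁ z₀)
    (hM12 : DifferentiableAt ℝ M₁₂ z₀)
    (h1 : dzbar M₁₁ z₀ = Q12 g z₀ * M₂₁ z₀)
    (h2 : dzbar M₁₂ z₀ - Complex.I * k * M₁₂ z₀ = Q12 g z₀ * M₂₂ z₀) :
    dzbar (fun z => M₁₁ z + efun z (-k) * M₁₂ z) z₀ =
      Q12 g z₀ * efun z₀ (-k) * (M₂₂ z₀ + efun z₀ k * M₂₁ z₀) +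
        Complex.I * (k - (starRingEnd ℂ) k) * efun z₀ (-k) * M₁₂ z₀ := by
  have he := differentiableAt_efun (-k) z₀
  rw [dzbar_add hM11 (he.fun_mul hM12), dzbar_mul he hM12, dzbar_efun, map_neg]
  linear_combination h1 + efun z₀ (-k) * h2 - Q12 g z₀ * M₂₁ z₀ * efun_neg_mul_efun z₀ k

theorem stmt10 (k z₀ : ℂ) (g M₁₁ M₁₂ M₂₁ M₂₂ : ℂ → ℂ)
    (hg : DifferentiableAt ℝ g z₀)
    (hM11 : DifferentiableAt ℝ M₁₁ z₀)
    (hM12 : DifferentiableAt ℝ M₁₂ z₀)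
    (hg0 : g z₀ ≠ 0)
    (h1 : dzbar M₁₁ z₀ = Q12 g z₀ * M₂₁ z₀)
    (h2 : dzbar M₁₂ z₀ - Complex.I * k * M₁₂ z₀ = Q12 g z₀ * M₂₂ z₀) :
    dzbar (fun z => M₁₁ z + efun z (-k) * M₁₂ z) z₀ =
      Q12 g z₀ * efun z₀ (-k) * (M₂₂ z₀ + efun z₀ k * M₂₁ z₀) +
        Complex.I * (k - (starRingEnd ℂ) k) * efun z₀ (-k) * M₁₂ z₀ :=
  stmt10_general k z₀ g M₁₁ M₁₂ M₂₁ M₂₂ hM11 hM12 h1 h2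
end
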